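/- arXiv:1712.03040 — 6 statements merged into one kernel-verified Lean document; each statement's English description precedes it below -/
import Mathlib

section
/- Let β > 0, G ≥ 0 and 0 < κ ≤ 1. Define f_PS(λ) = β·exp(-λG) and f_DPP(λ) = β·(1 - λG/(1 + λG/κ))^(1 + λG/κ) for λ ≥ 0 (real exponent). Then for every λ ≥ 0, 0 ≤ f_DPP(λ) ≤ f_PS(λ). -/
/-- For `β > 0`, `G ≥ 0`, `0 < κ ≤ 1`, the DPP fixed-point function
`f_DPP(λ) = β (1 - λG/(1 + λG/κ))^(1 + λG/κ)` satisfies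
`0 ≤ f_DPP(λ) ≤ f_PS(λ) = β exp(-λG)` for all `λ ≥ 0`. -/
theorem fDPP_nonneg_le_fPS (β G κ : ℝ) (hβ : 0 < β) (hG : 0 ≤ G)
    (hκ0 : 0 < κ) (hκ1 : κ ≤ 1) :
    ∀ lam : ℝ, 0 ≤ lam →
      0 ≤ β * (1 - lam * G / (1 + lam * G / κ)) ^ (1 + lam * G / κ) ∧
      β * (1 - lam * G / (1 + lam * G / κ)) ^ (1 + lam * G / κ) ≤
        β * Real.exp (-(lam * G)) := by
  intro lam hlam
  set x := lam * G with hx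
  have hx0 : 0 ≤ x := mul_nonneg hlam hG
  set t := 1 + x / κ with ht
  have ht1 : 1 ≤ t := by
    rw [ht]
    have : 0 ≤ x / κ := div_nonneg hx0 hκ0.le
    linarith
  have ht0 : 0 < t := lt_of_lt_of_le one_pos ht1
  have hxt : x ≤ t := by
    rw [ht]
    have h1 : x ≤ x / κ := le_div_self hx0 hκ0 hκ1
    linarith
  have hb0 : 0 ≤ 1 - x / t := by
    have := (div_le_one ht0).2 hxt
    linarith
  constructor
  · exact mul_nonneg hβ.le (Real.rpow_nonneg hb0 _)
  · apply mul_le_mul_of_nonneg_left _ hβ.le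
    have hle : 1 - x / t ≤ Real.exp (-(x / t)) := by
      have := Real.add_one_le_exp (-(x / t))
      linarith
    calc (1 - x/t) ^ t ≤ Real.exp (-(x/t)) ^ t :=
          Real.rpow_le_rpow hb0 hle ht0.le
      _ = Real.exp (-x) := by
          rw [← Real.exp_mul]
          congr 1
          field_simp
end

section
/- Let β > 0, G > 0 and 0 < κ ≤ 1. The function f_DPP(λ) = β·(1 - λG/(1 + λG/κ))^(1 + λG/κ) (real exponent) is strictly decreasing on [0, ∞). -/
/-- For `β > 0`, `G > 0`, `0 < κ ≤ 1`, the DPP fixed-point function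
`f_DPP(λ) = β (1 - λG/(1 + λG/κ))^(1 + λG/κ)` is strictly decreasing on `[0, ∞)`. -/
theorem fDPP_strictAntiOn (β G κ : ℝ) (hβ : 0 < β) (hG : 0 < G)
    (hκ0 : 0 < κ) (hκ1 : κ ≤ 1) :
    StrictAntiOn
      (fun lam : ℝ =>
        β * (1 - lam * G / (1 + lam * G / κ)) ^ (1 + lam * G / κ))
      (Set.Ici (0 : ℝ)) := by
  intro a ha b hb hab
  simp only [Set.mem_Ici] at ha hb
  set x1 := a * G with hx1
  set x2 := b * G with hx2
  have hx1nn : 0 ≤ x1 := mul_nonneg ha hG.le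
  have hx2pos : 0 < x2 := mul_pos (lt_of_le_of_lt ha hab) hG
  have hx12 : x1 < x2 := by
    apply mul_lt_mul_of_pos_right hab hG
  have hd1 : 0 < 1 + x1 / κ := by positivity
  have hd2 : 0 < 1 + x2 / κ := by positivity
  -- rewrite the bases
  have hbase : ∀ x : ℝ, 0 ≤ x →
      1 - x / (1 + x / κ) = (κ + (1 - κ) * x) / (κ + x) := by
    intro x hx
    have h1 : 0 < 1 + x / κ := by positivity
    have h2 : 0 < κ + x := by positivity
    field_simp
    ring
  have hB1 := hbase x1 hx1nn
  have hB2 := hbase x2 hx2pos.le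
  have hk1 : 0 < κ + x1 := by positivity
  have hk2 : 0 < κ + x2 := by positivity
  have hnum1 : 0 < κ + (1 - κ) * x1 := by nlinarith
  have hnum2 : 0 < κ + (1 - κ) * x2 := by nlinarith
  have hB2pos : 0 < 1 - x2 / (1 + x2 / κ) := by
    rw [hB2]; positivity
  have hB2lt1 : 1 - x2 / (1 + x2 / κ) < 1 := by
    have : 0 < x2 / (1 + x2 / κ) := div_pos hx2pos hd2
    linarith
  have hB1le1 : 1 - x1 / (1 + x1 / κ) ≤ 1 := by
    have : 0 ≤ x1 / (1 + x1 / κ) := div_nonneg hx1nn hd1.le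
    linarith
  have hBB : 1 - x2 / (1 + x2 / κ) < 1 - x1 / (1 + x1 / κ) := by
    rw [hB1, hB2, div_lt_div_iff₀ hk2 hk1]
    nlinarith [mul_lt_mul_of_pos_left hx12 (mul_pos hκ0 hκ0)]
  have hT1 : (1 : ℝ) ≤ 1 + x1 / κ := by
    have : 0 ≤ x1 / κ := div_nonneg hx1nn hκ0.le
    linarith
  have hT12 : 1 + x1 / κ < 1 + x2 / κ := by
    gcongr
  -- combine
  have step1 : (1 - x2 / (1 + x2 / κ)) ^ (1 + x2 / κ)
      < (1 - x2 / (1 + x2 / κ)) ^ (1 + x1 / κ) :=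
    Real.rpow_lt_rpow_of_exponent_gt hB2pos hB2lt1 hT12
  have step2 : (1 - x2 / (1 + x2 / κ)) ^ (1 + x1 / κ)
      ≤ (1 - x1 / (1 + x1 / κ)) ^ (1 + x1 / κ) :=
    Real.rpow_le_rpow hB2pos.le hBB.le (by linarith)
  have : (1 - x2 / (1 + x2 / κ)) ^ (1 + x2 / κ)
      < (1 - x1 / (1 + x1 / κ)) ^ (1 + x1 / κ) := lt_of_lt_of_le step1 step2
  simpa only [← hx1, ← hx2] using mul_lt_mul_of_pos_left this hβ
end

section
/- Let β > 0, G > 0 and 0 < κ ≤ 1. Then there exists a unique λ ≥ 0 satisfying the fixed-point equation λ = β·(1 - λG/(1 + λG/κ))^(1 + λG/κ) (real exponent); moreover this λ is strictly positive. -/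
open Real

namespace LambdaDPPAux

/-- Auxiliary function whose zeros on `(0,∞)` correspond to fixed points. -/
noncomputable def H (β a b x : ℝ) : ℝ :=
  Real.log x - Real.log β - (1 + x * b) * Real.log ((1 + x * a) / (1 + x * b))

lemma num_pos {a x : ℝ} (ha : 0 ≤ a) (hx : 0 ≤ x) : 0 < 1 + x * a := by nlinarith

lemma den_pos {b x : ℝ} (hb : 0 < b) (hx : 0 ≤ x) : 0 < 1 + x * b := by nlinarith

lemma base_pos {a b x : ℝ} (ha : 0 ≤ a) (hb : 0 < b) (hx : 0 ≤ x) :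
    0 < (1 + x * a) / (1 + x * b) :=
  div_pos (num_pos ha hx) (den_pos hb hx)

lemma base_le_one {a b x : ℝ} (ha : 0 ≤ a) (hab : a < b) (hx : 0 ≤ x) :
    (1 + x * a) / (1 + x * b) ≤ 1 := by
  rw [div_le_one (den_pos (ha.trans_lt hab) hx)]
  nlinarith

lemma base_anti {a b x y : ℝ} (ha : 0 ≤ a) (hab : a < b) (hx : 0 ≤ x) (hxy : x ≤ y) :
    (1 + y * a) / (1 + y * b) ≤ (1 + x * a) / (1 + x * b) := by
  have hb : 0 < b := ha.trans_lt hab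
  rw [div_le_div_iff₀ (den_pos hb (hx.trans hxy)) (den_pos hb hx)]
  nlinarith

lemma H_strictMonoOn {β a b : ℝ} (ha : 0 ≤ a) (hab : a < b) :
    StrictMonoOn (H β a b) (Set.Ioi 0) := by
  intro x hx y hy hxy
  have hx0 : (0:ℝ) < x := hx
  have hy0 : (0:ℝ) < y := hy
  have hb : 0 < b := ha.trans_lt hab
  have h1 : Real.log x < Real.log y := Real.log_lt_log hx0 hxy
  have hlx : Real.log ((1 + x * a) / (1 + x * b)) ≤ 0 :=
    Real.log_nonpos (le_of_lt (base_pos ha hb hx0.le)) (base_le_one ha hab hx0.le)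
  have hly : Real.log ((1 + y * a) / (1 + y * b)) ≤
      Real.log ((1 + x * a) / (1 + x * b)) :=
    Real.log_le_log (base_pos ha hb hy0.le) (base_anti ha hab hx0.le hxy.le)
  have h2 : (1 + x * b) * (-Real.log ((1 + x * a) / (1 + x * b))) ≤
      (1 + y * b) * (-Real.log ((1 + y * a) / (1 + y * b))) := by
    apply mul_le_mul (by nlinarith) (by linarith) (by linarith)
    nlinarith
  unfold H
  nlinarith

lemma H_cont {β a b : ℝ} (ha : 0 ≤ a) (hb : 0 < b) :
    ContinuousOn (H β a b) (Set.Ioi 0) := by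
  apply ContinuousOn.sub
  · apply ContinuousOn.sub
    · exact Real.continuousOn_log.mono (by intro x hx; exact ne_of_gt hx)
    · exact continuousOn_const
  · apply ContinuousOn.mul
    · fun_prop
    · apply ContinuousOn.log
      · apply ContinuousOn.div
        · fun_prop
        · fun_prop
        · intro x hx; exact ne_of_gt (den_pos hb (le_of_lt hx))
      · intro x hx; exact ne_of_gt (base_pos ha hb (le_of_lt hx))

end LambdaDPPAux

open LambdaDPPAux in
/-- For `β > 0`, `G > 0`, `0 < κ ≤ 1`, there exists a unique `λ ≥ 0` with
`λ = β (1 - λG/(1 + λG/κ))^(1 + λG/κ)`, and any such `λ` is strictly positive. -/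
theorem lambdaDPP_exists_unique (β G κ : ℝ) (hβ : 0 < β) (hG : 0 < G)
    (hκ0 : 0 < κ) (hκ1 : κ ≤ 1) :
    (∃! lam : ℝ, 0 ≤ lam ∧
        lam = β * (1 - lam * G / (1 + lam * G / κ)) ^ (1 + lam * G / κ)) ∧
    (∀ lam : ℝ, 0 ≤ lam →
        lam = β * (1 - lam * G / (1 + lam * G / κ)) ^ (1 + lam * G / κ) →
        0 < lam) := by
  set a : ℝ := G / κ - G with ha_def
  set b : ℝ := G / κ with hb_def
  have ha : 0 ≤ a := by
    have : G ≤ G / κ := by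
      rw [le_div_iff₀ hκ0]; nlinarith
    simpa [ha_def] using sub_nonneg.mpr this
  have hb : 0 < b := div_pos hG hκ0
  have hab : a < b := by simp [ha_def, hb_def]; linarith
  -- rewrite the base
  have hbase : ∀ x : ℝ, 0 ≤ x →
      1 - x * G / (1 + x * G / κ) = (1 + x * a) / (1 + x * b) := by
    intro x hx
    have hd : (0:ℝ) < 1 + x * b := den_pos hb hx
    have hd' : 1 + x * G / κ = 1 + x * b := by rw [hb_def]; ring
    rw [hd']
    field_simp
    ring
  have hexp : ∀ x : ℝ, 1 + x * G / κ = 1 + x * b := by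
    intro x; rw [hb_def]; ring
  -- positivity: a fixed point cannot be 0
  have hpos : ∀ lam : ℝ, 0 ≤ lam →
      lam = β * (1 - lam * G / (1 + lam * G / κ)) ^ (1 + lam * G / κ) → 0 < lam := by
    intro lam hlam heq
    rcases lt_or_eq_of_le hlam with h | h
    · exact h
    · exfalso
      rw [← h] at heq
      simp at heq
      linarith
  -- equivalence with H = 0 for positive lam
  have hequiv : ∀ x : ℝ, 0 < x →
      (x = β * (1 - x * G / (1 + x * G / κ)) ^ (1 + x * G / κ) ↔ H β a b x = 0) := by
    intro x hx
    have hB : 0 < (1 + x * a) / (1 + x * b) := base_pos ha hb hx.le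
    rw [hbase x hx.le, hexp x]
    constructor
    · intro h
      have := congrArg Real.log h
      rw [Real.log_mul (ne_of_gt hβ)
          (ne_of_gt (Real.rpow_pos_of_pos hB _)),
          Real.log_rpow hB] at this
      unfold H
      linarith
    · intro h
      unfold H at h
      have hlog : Real.log x = Real.log β + (1 + x * b) * Real.log ((1 + x * a) / (1 + x * b)) := by
        linarith
      have := congrArg Real.exp hlog
      rw [Real.exp_log hx, Real.exp_add, Real.exp_log hβ] at this
      rw [Real.rpow_def_of_pos hB, mul_comm (Real.log _)]
      exact this
  -- existence: find a root of H in [x₀, M]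
  set x₀ : ℝ := min 1 (β * Real.exp (-((1 + b) * b) - 1)) with hx0_def
  have hx0pos : 0 < x₀ := lt_min one_pos (by positivity)
  have hx0le1 : x₀ ≤ 1 := min_le_left _ _
  set M : ℝ := max β 1 with hM_def
  have hMpos : 0 < M := lt_of_lt_of_le hβ (le_max_left _ _)
  have hx0ltM : x₀ < M := by
    have h1 : x₀ ≤ β * Real.exp (-((1 + b) * b) - 1) := min_le_right _ _
    have h2 : Real.exp (-((1 + b) * b) - 1) < 1 := by
      rw [Real.exp_lt_one_iff]; nlinarith
    have : β * Real.exp (-((1 + b) * b) - 1) < β := by nlinarith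
    calc x₀ ≤ β * Real.exp (-((1 + b) * b) - 1) := h1
      _ < β := this
      _ ≤ M := le_max_left _ _
  -- H x₀ < 0
  have hHx0 : H β a b x₀ < 0 := by
    have hbx0 : (0:ℝ) < 1 + x₀ * b := den_pos hb hx0pos.le
    have hBpos : 0 < (1 + x₀ * a) / (1 + x₀ * b) := base_pos ha hb hx0pos.le
    have hlogx0 : Real.log x₀ ≤ Real.log β + (-((1 + b) * b) - 1) := by
      have : x₀ ≤ β * Real.exp (-((1 + b) * b) - 1) := min_le_right _ _
      calc Real.log x₀ ≤ Real.log (β * Real.exp (-((1 + b) * b) - 1)) :=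
            Real.log_le_log hx0pos this
        _ = Real.log β + (-((1 + b) * b) - 1) := by
            rw [Real.log_mul (ne_of_gt hβ) (Real.exp_ne_zero _), Real.log_exp]
    -- bound on -log base : -log((1+xa)/(1+xb)) ≤ log(1+xb) ≤ xb
    have hlogb : -Real.log ((1 + x₀ * a) / (1 + x₀ * b)) ≤ x₀ * b := by
      rw [Real.log_div (ne_of_gt (num_pos ha hx0pos.le)) (ne_of_gt hbx0)]
      have h1 : 0 ≤ Real.log (1 + x₀ * a) :=
        Real.log_nonneg (by nlinarith)
      have h2 : Real.log (1 + x₀ * b) ≤ x₀ * b := by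
        have := Real.log_le_sub_one_of_pos hbx0
        linarith
      linarith
    have hprod : (1 + x₀ * b) * (-Real.log ((1 + x₀ * a) / (1 + x₀ * b))) ≤
        (1 + b) * b := by
      have hnn : 0 ≤ -Real.log ((1 + x₀ * a) / (1 + x₀ * b)) := by
        have := Real.log_nonpos hBpos.le (base_le_one ha hab hx0pos.le)
        linarith
      have h1 : (1 + x₀ * b) * (-Real.log ((1 + x₀ * a) / (1 + x₀ * b))) ≤
          (1 + x₀ * b) * (x₀ * b) := by
        apply mul_le_mul_of_nonneg_left hlogb hbx0.le
      have h2 : (1 + x₀ * b) * (x₀ * b) ≤ (1 + b) * b := by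
        have e1 : 1 + x₀ * b ≤ 1 + b := by nlinarith
        have e2 : x₀ * b ≤ b := by nlinarith
        nlinarith
      linarith
    unfold H
    nlinarith
  -- H M > 0
  have hHM : 0 < H β a b M := by
    have hBpos : 0 < (1 + M * a) / (1 + M * b) := base_pos ha hb hMpos.le
    have hBlt1 : (1 + M * a) / (1 + M * b) < 1 := by
      rw [div_lt_one (den_pos hb hMpos.le)]
      nlinarith
    have hlogneg : Real.log ((1 + M * a) / (1 + M * b)) < 0 :=
      Real.log_neg hBpos hBlt1
    have hlogM : Real.log β ≤ Real.log M :=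
      Real.log_le_log hβ (le_max_left _ _)
    have hMb : 0 < 1 + M * b := den_pos hb hMpos.le
    unfold H
    nlinarith
  -- IVT
  have hsub : Set.Icc x₀ M ⊆ Set.Ioi 0 := fun x hx => lt_of_lt_of_le hx0pos hx.1
  have hcont : ContinuousOn (H β a b) (Set.Icc x₀ M) := (H_cont ha hb).mono hsub
  obtain ⟨c, hc, hHc⟩ : ∃ c ∈ Set.Icc x₀ M, H β a b c = 0 := by
    have := intermediate_value_Icc hx0ltM.le hcont
    have h0 : (0:ℝ) ∈ Set.Icc (H β a b x₀) (H β a b M) := ⟨hHx0.le, hHM.le⟩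
    exact this h0
  have hcpos : 0 < c := lt_of_lt_of_le hx0pos hc.1
  refine ⟨⟨c, ⟨hcpos.le, (hequiv c hcpos).mpr hHc⟩, ?_⟩, hpos⟩
  rintro y ⟨hy0, hyeq⟩
  have hypos : 0 < y := hpos y hy0 hyeq
  have hHy : H β a b y = 0 := (hequiv y hypos).mp hyeq
  exact (H_strictMonoOn ha hab).injOn hypos hcpos (by rw [hHy, hHc])
end

section
/- Let G > 0 and 0 < κ ≤ 1. Suppose 0 < β₁ < β₂, and let λ₁, λ₂ ≥ 0 satisfy λᵢ = βᵢ·(1 - λᵢG/(1 + λᵢG/κ))^(1 + λᵢG/κ) for i = 1, 2 (real exponents). Then λ₁ < λ₂. -/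
lemma dpp_base_pos (G κ x : ℝ) (hG : 0 < G) (hκ0 : 0 < κ) (hκ1 : κ ≤ 1)
    (hx : 0 ≤ x) : 0 < 1 - x * G / (1 + x * G / κ) := by
  have hxG : 0 ≤ x * G := mul_nonneg hx hG.le
  have hle : x * G ≤ x * G / κ := by
    rw [le_div_iff₀ hκ0]; nlinarith
  have hD : 0 < 1 + x * G / κ := by positivity
  have : x * G / (1 + x * G / κ) < 1 := by
    rw [div_lt_one hD]; linarith
  linarith

lemma dpp_base_le_one (G κ x : ℝ) (hG : 0 < G) (hκ0 : 0 < κ)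
    (hx : 0 ≤ x) : 1 - x * G / (1 + x * G / κ) ≤ 1 := by
  have hD : 0 < 1 + x * G / κ := by positivity
  have : 0 ≤ x * G / (1 + x * G / κ) := by positivity
  linarith

lemma dpp_h_anti (G κ a b : ℝ) (hG : 0 < G) (hκ0 : 0 < κ) (hκ1 : κ ≤ 1)
    (ha : 0 ≤ a) (hab : a ≤ b) :
    (1 - b * G / (1 + b * G / κ)) ^ (1 + b * G / κ) ≤
      (1 - a * G / (1 + a * G / κ)) ^ (1 + a * G / κ) := by
  have hb : 0 ≤ b := ha.trans hab
  have hDa : 0 < 1 + a * G / κ := by positivity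
  have hDb : 0 < 1 + b * G / κ := by positivity
  have hpa := dpp_base_pos G κ a hG hκ0 hκ1 ha
  have hpb := dpp_base_pos G κ b hG hκ0 hκ1 hb
  have hbase : 1 - b * G / (1 + b * G / κ) ≤ 1 - a * G / (1 + a * G / κ) := by
    have : a * G / (1 + a * G / κ) ≤ b * G / (1 + b * G / κ) := by
      rw [div_le_div_iff₀ hDa hDb]
      have h1 : a * G ≤ b * G := by nlinarith
      have h2 : 0 ≤ a * b * G * G / κ := by positivity
      have : a * G * (1 + b * G / κ) = a * G + a * b * G * G / κ := by ring
      rw [this]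
      have : b * G * (1 + a * G / κ) = b * G + a * b * G * G / κ := by ring
      rw [this]
      linarith
    linarith
  have hexp : 1 + a * G / κ ≤ 1 + b * G / κ := by
    have hab' : a * G ≤ b * G := by nlinarith
    gcongr
  calc (1 - b * G / (1 + b * G / κ)) ^ (1 + b * G / κ)
      ≤ (1 - a * G / (1 + a * G / κ)) ^ (1 + b * G / κ) :=
        Real.rpow_le_rpow hpb.le hbase hDb.le
    _ ≤ (1 - a * G / (1 + a * G / κ)) ^ (1 + a * G / κ) :=
        Real.rpow_le_rpow_of_exponent_ge hpa
          (dpp_base_le_one G κ a hG hκ0 ha) hexp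

/-- For `G > 0`, `0 < κ ≤ 1`: if `0 < β₁ < β₂` and `λ₁, λ₂ ≥ 0` are fixed points
of the respective DPP fixed-point functions, then `λ₁ < λ₂`. -/
theorem lambdaDPP_strict_mono_in_beta (G κ β₁ β₂ lam₁ lam₂ : ℝ)
    (hG : 0 < G) (hκ0 : 0 < κ) (hκ1 : κ ≤ 1)
    (hβ₁ : 0 < β₁) (hβ : β₁ < β₂)
    (hlam₁ : 0 ≤ lam₁) (hlam₂ : 0 ≤ lam₂)
    (hfix₁ : lam₁ = β₁ * (1 - lam₁ * G / (1 + lam₁ * G / κ)) ^ (1 + lam₁ * G / κ))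
    (hfix₂ : lam₂ = β₂ * (1 - lam₂ * G / (1 + lam₂ * G / κ)) ^ (1 + lam₂ * G / κ)) :
    lam₁ < lam₂ := by
  by_contra hcon
  push_neg at hcon
  set h₁ := (1 - lam₁ * G / (1 + lam₁ * G / κ)) ^ (1 + lam₁ * G / κ) with hh1
  set h₂ := (1 - lam₂ * G / (1 + lam₂ * G / κ)) ^ (1 + lam₂ * G / κ) with hh2
  have hp1 : 0 < h₁ := Real.rpow_pos_of_pos (dpp_base_pos G κ lam₁ hG hκ0 hκ1 hlam₁) _
  have hp2 : 0 < h₂ := Real.rpow_pos_of_pos (dpp_base_pos G κ lam₂ hG hκ0 hκ1 hlam₂) _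
  have hanti : h₁ ≤ h₂ := dpp_h_anti G κ lam₂ lam₁ hG hκ0 hκ1 hlam₂ hcon
  -- lam₂ * h₁ ≤ lam₁ * h₂
  have key : lam₂ * h₁ ≤ lam₁ * h₂ := by nlinarith
  rw [hfix₁, hfix₂] at key
  have : β₂ ≤ β₁ := by nlinarith
  linarith
end

section
/- Let β > 0, G > 0 and 0 < κ ≤ 1. Let λ_D ≥ 0 satisfy λ_D = β·(1 - λ_D G/(1 + λ_D G/κ))^(1 + λ_D G/κ) (real exponent), and let λ_P ≥ 0 satisfy λ_P = β·exp(-λ_P G). Then λ_D ≤ λ_P. -/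
/-- For `β > 0`, `G > 0`, `0 < κ ≤ 1`: if `λ_D ≥ 0` is a fixed point of the DPP
fixed-point function and `λ_P ≥ 0` is a fixed point of the Poisson-saddlepoint
fixed-point function, then `λ_D ≤ λ_P`. -/
theorem lambdaDPP_le_lambdaPS (β G κ lamD lamP : ℝ)
    (hβ : 0 < β) (hG : 0 < G) (hκ0 : 0 < κ) (hκ1 : κ ≤ 1)
    (hlamD : 0 ≤ lamD) (hlamP : 0 ≤ lamP)
    (hfixD : lamD = β * (1 - lamD * G / (1 + lamD * G / κ)) ^ (1 + lamD * G / κ))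
    (hfixP : lamP = β * Real.exp (-(lamP * G))) :
    lamD ≤ lamP := by
  by_contra h
  push_neg at h
  set x := lamD * G with hxdef
  have hx : 0 ≤ x := mul_nonneg hlamD hG.le
  set t := 1 + x / κ with htdef
  have htpos : 0 < t := by positivity
  have hxt : x ≤ t := by
    have : x ≤ x / κ := by
      rw [le_div_iff₀ hκ0]
      nlinarith
    simp only [htdef]; linarith
  have base_nonneg : 0 ≤ 1 - x / t := by
    have : x / t ≤ 1 := (div_le_one htpos).mpr hxt
    linarith
  have base_le : 1 - x / t ≤ Real.exp (-(x / t)) := by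
    have := Real.add_one_le_exp (-(x / t)); linarith
  have key : (1 - x / t) ^ t ≤ Real.exp (-x) := by
    calc (1 - x / t) ^ t ≤ (Real.exp (-(x / t))) ^ t :=
          Real.rpow_le_rpow base_nonneg base_le htpos.le
      _ = Real.exp (-(x / t) * t) := by
          rw [Real.rpow_def_of_pos (Real.exp_pos _), Real.log_exp]
      _ = Real.exp (-x) := by
          congr 1; field_simp
  have hle : lamD ≤ β * Real.exp (-x) := by
    rw [hfixD]
    exact mul_le_mul_of_nonneg_left key hβ.le
  have hmono : Real.exp (-x) ≤ Real.exp (-(lamP * G)) := by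
    apply Real.exp_le_exp.mpr
    have : lamP * G ≤ x := by
      simp only [hxdef]
      exact mul_le_mul_of_nonneg_right h.le hG.le
    linarith
  have : lamD ≤ lamP := by
    calc lamD ≤ β * Real.exp (-x) := hle
      _ ≤ β * Real.exp (-(lamP * G)) := mul_le_mul_of_nonneg_left hmono hβ.le
      _ = lamP := hfixP.symm
  linarith
end

section
/- For every κ with 0 < κ ≤ 1, the function h_κ(x) = x·(1 - κx/(1+x))^(-(1+x)) (real exponent) is strictly increasing on [0, ∞). -/
/-- For every `κ` with `0 < κ ≤ 1`, the function
`h_κ(x) = x (1 - κx/(1+x))^(-(1+x))` (real exponent) is strictly increasing on `[0, ∞)`. -/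
theorem hkappa_strictMonoOn (κ : ℝ) (hκ0 : 0 < κ) (hκ1 : κ ≤ 1) :
    StrictMonoOn
      (fun x : ℝ => x * (1 - κ * x / (1 + x)) ^ (-(1 + x)))
      (Set.Ici (0 : ℝ)) := by
  have hb_pos : ∀ x : ℝ, 0 ≤ x → 0 < 1 - κ * x / (1 + x) := by
    intro x hx
    have h1x : 0 < 1 + x := by linarith
    have : κ * x / (1 + x) < 1 := by
      rw [div_lt_one h1x]; nlinarith
    linarith
  intro x hx y hy hxy
  simp only [Set.mem_Ici] at hx hy
  have hbx := hb_pos x hx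
  have hby := hb_pos y (by linarith)
  have h1x : 0 < 1 + x := by linarith
  have h1y : 0 < 1 + y := by linarith
  have hanti : 1 - κ * y / (1 + y) ≤ 1 - κ * x / (1 + x) := by
    have : κ * x / (1 + x) ≤ κ * y / (1 + y) := by
      rw [div_le_div_iff₀ h1x h1y]; nlinarith
    linarith
  have hle1 : 1 - κ * y / (1 + y) ≤ 1 := by
    have : 0 ≤ κ * y / (1 + y) := by positivity
    linarith
  have key : (1 - κ * x / (1 + x)) ^ (-(1 + x)) ≤ (1 - κ * y / (1 + y)) ^ (-(1 + y)) := by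
    rw [Real.rpow_neg hbx.le, Real.rpow_neg hby.le, ← Real.inv_rpow hbx.le,
      ← Real.inv_rpow hby.le]
    have h1 : (1:ℝ) ≤ (1 - κ * y / (1 + y))⁻¹ := (one_le_inv₀ hby).mpr hle1
    calc (1 - κ * x / (1 + x))⁻¹ ^ (1 + x)
        ≤ (1 - κ * y / (1 + y))⁻¹ ^ (1 + x) :=
          Real.rpow_le_rpow (inv_nonneg.mpr hbx.le)
            (by exact inv_anti₀ hby hanti) (by linarith)
      _ ≤ (1 - κ * y / (1 + y))⁻¹ ^ (1 + y) :=
          Real.rpow_le_rpow_of_exponent_le h1 (by linarith)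
  calc x * (1 - κ * x / (1 + x)) ^ (-(1 + x))
      ≤ x * (1 - κ * y / (1 + y)) ^ (-(1 + y)) := mul_le_mul_of_nonneg_left key hx
    _ < y * (1 - κ * y / (1 + y)) ^ (-(1 + y)) :=
        mul_lt_mul_of_pos_right hxy (Real.rpow_pos_of_pos hby _)
end
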